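/- For a continuous function f of polynomial growth, s ≥ 1, and g(x) = ∫₀^x f(t) dt, the twisted Mellin transform satisfies Mg(s) = Mf(s) + Mg(s−1). -/

import Mathlib

open MeasureTheory Set Real

noncomputable def twistedMellin (f : ℝ → ℝ) (s : ℝ) : ℝ :=
  (∫ x in Set.Ioi (0:ℝ), f x * x ^ s * Real.exp (-x)) / Real.Gamma (s + 1)

/-!
Write `w_s(x) = x ^ s * exp (-x)`, so that `w_s' = s * w_{s-1} - w_s`. If `g' = f` and `g` has
polynomial growth, integration by parts on `(0, ∞)` has no boundary terms (`0 ^ s = 0` at the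
left end, exponential decay at the right one) and gives `∫ g w_s = ∫ f w_s + s ∫ g w_{s-1}`.
Dividing by `Γ(s + 1) = s Γ(s)` turns this into `Mg(s) = Mf(s) + Mg(s - 1)`.
-/

lemma abs_mul_rpow_mul_exp_neg_le {h : ℝ → ℝ} {D : ℝ} {M : ℕ} {x : ℝ} (hx : 0 < x)
    (hb : |h x| ≤ D * x ^ M) (p : ℝ) :
    ‖h x * x ^ p * exp (-x)‖ ≤ D * (x ^ ((M : ℝ) + p) * exp (-x)) := by
  rw [Real.norm_eq_abs, abs_mul, abs_mul, abs_of_nonneg (rpow_nonneg hx.le p),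
    abs_of_nonneg (exp_pos _).le, rpow_add hx, rpow_natCast]
  calc |h x| * x ^ p * exp (-x) ≤ D * x ^ M * x ^ p * exp (-x) := by gcongr
    _ = D * (x ^ M * x ^ p * exp (-x)) := by ring

lemma integrableOn_mul_rpow_mul_exp_neg {h : ℝ → ℝ} (hc : ContinuousOn h (Ioi 0))
    {D : ℝ} {M : ℕ} (hb : ∀ x > (0:ℝ), |h x| ≤ D * x ^ M) {p : ℝ} (hp : -1 < p) :
    IntegrableOn (fun x => h x * x ^ p * exp (-x)) (Ioi 0) := by
  have hdom : IntegrableOn (fun x => D * (x ^ ((M : ℝ) + p) * exp (-x))) (Ioi 0) := by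
    have hpos : 0 < (M : ℝ) + p + 1 := by linarith [(Nat.cast_nonneg M : (0:ℝ) ≤ M)]
    have := (GammaIntegral_convergent hpos).const_mul D
    simp only [add_sub_cancel_right, mul_comm (exp _)] at this
    exact this
  refine hdom.mono' ?_ ?_
  · exact ((hc.mul (continuousOn_id.rpow_const fun x hx => Or.inl (ne_of_gt hx))).mul
      (continuous_exp.comp continuous_neg).continuousOn).aestronglyMeasurable measurableSet_Ioi
  · filter_upwards [ae_restrict_mem measurableSet_Ioi] with x hx
    exact abs_mul_rpow_mul_exp_neg_le hx (hb x hx) p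

lemma tendsto_mul_rpow_mul_exp_neg_atTop {h : ℝ → ℝ} {D : ℝ} {M : ℕ}
    (hb : ∀ x > (0:ℝ), |h x| ≤ D * x ^ M) (p : ℝ) :
    Filter.Tendsto (fun x => h x * x ^ p * exp (-x)) Filter.atTop (nhds 0) := by
  have hdom := (tendsto_rpow_mul_exp_neg_mul_atTop_nhds_zero ((M : ℝ) + p) 1 one_pos).const_mul D
  rw [mul_zero] at hdom
  refine squeeze_zero_norm' ?_ (by simpa using hdom)
  filter_upwards [Filter.eventually_gt_atTop 0] with x hx
  simpa using abs_mul_rpow_mul_exp_neg_le hx (hb x hx) p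

lemma hasDerivAt_mul_rpow_mul_exp_neg {g : ℝ → ℝ} {g' x : ℝ} (hg : HasDerivAt g g' x)
    (hx : 0 < x) (s : ℝ) :
    HasDerivAt (fun y => g y * y ^ s * exp (-y))
      (g' * x ^ s * exp (-x) + (s * (g x * x ^ (s - 1) * exp (-x)) - g x * x ^ s * exp (-x)))
      x := by
  refine ((hg.mul (hasDerivAt_rpow_const (p := s) (Or.inl hx.ne'))).mul
    (hasDerivAt_neg x).exp).congr_deriv ?_
  simp only [Pi.mul_apply]
  ring

theorem integral_mul_rpow_mul_exp_neg_eq {f g : ℝ → ℝ} {s : ℝ} (hs : 0 < s)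
    (hg0 : ContinuousWithinAt g (Ici 0) 0) (hg : ∀ x ∈ Ioi (0:ℝ), HasDerivAt g (f x) x)
    (hIf : IntegrableOn (fun x => f x * x ^ s * exp (-x)) (Ioi 0))
    (hIg : IntegrableOn (fun x => g x * x ^ s * exp (-x)) (Ioi 0))
    (hIg' : IntegrableOn (fun x => g x * x ^ (s - 1) * exp (-x)) (Ioi 0))
    (hlim : Filter.Tendsto (fun x => g x * x ^ s * exp (-x)) Filter.atTop (nhds 0)) :
    ∫ x in Ioi (0:ℝ), g x * x ^ s * exp (-x) =
      (∫ x in Ioi (0:ℝ), f x * x ^ s * exp (-x)) +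
        s * ∫ x in Ioi (0:ℝ), g x * x ^ (s - 1) * exp (-x) := by
  have hcont : ContinuousWithinAt (fun x => g x * x ^ s * exp (-x)) (Ici 0) 0 :=
    (hg0.mul (continuousAt_rpow_const 0 s (Or.inr hs.le)).continuousWithinAt).mul
      (continuous_exp.comp continuous_neg).continuousWithinAt
  have hIg's := hIg'.const_mul s
  have hibp := integral_Ioi_of_hasDerivAt_of_tendsto hcont
    (fun x hx => hasDerivAt_mul_rpow_mul_exp_neg (hg x hx) hx s) (hIf.add (hIg's.sub hIg)) hlim
  rw [integral_add hIf (by exact hIg's.sub hIg), integral_sub hIg's hIg, integral_const_mul,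
    zero_rpow hs.ne', mul_zero, zero_mul, sub_zero] at hibp
  linarith

theorem twistedMellin_eq_add_of_hasDerivAt {f g : ℝ → ℝ}
    (hf : ContinuousOn f (Ioi 0)) {C : ℝ} {N : ℕ} (hfb : ∀ x > (0:ℝ), |f x| ≤ C * x ^ N)
    (hg0 : ContinuousWithinAt g (Ici 0) 0) (hg : ∀ x ∈ Ioi (0:ℝ), HasDerivAt g (f x) x)
    {D : ℝ} {M : ℕ} (hgb : ∀ x > (0:ℝ), |g x| ≤ D * x ^ M) {s : ℝ} (hs : 0 < s) :
    twistedMellin g s = twistedMellin f s + twistedMellin g (s - 1) := by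
  have hgc : ContinuousOn g (Ioi 0) := fun x hx => (hg x hx).continuousAt.continuousWithinAt
  have key := integral_mul_rpow_mul_exp_neg_eq hs hg0 hg
    (integrableOn_mul_rpow_mul_exp_neg hf hfb (by linarith))
    (integrableOn_mul_rpow_mul_exp_neg hgc hgb (by linarith))
    (integrableOn_mul_rpow_mul_exp_neg hgc hgb (by linarith))
    (tendsto_mul_rpow_mul_exp_neg_atTop hgb s)
  have hΓ : Gamma s ≠ 0 := (Gamma_pos_of_pos hs).ne'
  simp only [twistedMellin]
  rw [sub_add_cancel, key, Gamma_add_one hs.ne']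
  field_simp

lemma intervalIntegrable_of_continuousOn_Ici {f : ℝ → ℝ} (hf : ContinuousOn f (Ici 0))
    {x : ℝ} (hx : 0 ≤ x) :
    IntervalIntegrable f volume 0 x :=
  (hf.mono (by rw [uIcc_of_le hx]; exact Icc_subset_Ici_self)).intervalIntegrable

lemma hasDerivAt_primitive_of_continuousOn_Ici {f : ℝ → ℝ} (hf : ContinuousOn f (Ici 0))
    {x : ℝ} (hx : 0 < x) :
    HasDerivAt (fun y => ∫ t in (0:ℝ)..y, f t) (f x) x :=
  intervalIntegral.integral_hasDerivAt_right (intervalIntegrable_of_continuousOn_Ici hf hx.le)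
    ⟨Ici 0, Ici_mem_nhds hx, hf.aestronglyMeasurable measurableSet_Ici⟩
    (hf.continuousAt (Ici_mem_nhds hx))

lemma continuousWithinAt_primitive_of_continuousOn_Ici {f : ℝ → ℝ}
    (hf : ContinuousOn f (Ici 0)) :
    ContinuousWithinAt (fun y => ∫ t in (0:ℝ)..y, f t) (Ici 0) 0 := by
  have hcont := intervalIntegral.continuousOn_primitive_interval'
    (intervalIntegrable_of_continuousOn_Ici hf zero_le_one) left_mem_uIcc
  rw [uIcc_of_le zero_le_one] at hcont
  exact (hcont 0 (left_mem_Icc.mpr zero_le_one)).mono_of_mem_nhdsWithin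
    (Icc_mem_nhdsGE zero_lt_one)

lemma abs_primitive_le {f : ℝ → ℝ} (hf : ContinuousOn f (Ici 0)) {C : ℝ} {N : ℕ}
    (hb : ∀ x ≥ (0:ℝ), |f x| ≤ C * x ^ N) {x : ℝ} (hx : 0 ≤ x) :
    |∫ t in (0:ℝ)..x, f t| ≤ C / (N + 1) * x ^ (N + 1) :=
  calc |∫ t in (0:ℝ)..x, f t| ≤ ∫ t in (0:ℝ)..x, |f t| :=
        intervalIntegral.abs_integral_le_integral_abs hx
    _ ≤ ∫ t in (0:ℝ)..x, C * t ^ N :=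
        intervalIntegral.integral_mono_on hx (intervalIntegrable_of_continuousOn_Ici hf hx).abs
          ((by fun_prop : Continuous fun t : ℝ => C * t ^ N).intervalIntegrable 0 x)
          fun t ht => hb t ht.1
    _ = C / (N + 1) * x ^ (N + 1) := by
        rw [intervalIntegral.integral_const_mul, integral_pow]
        ring

theorem stmt4 (f : ℝ → ℝ) (hf : ContinuousOn f (Set.Ici 0))
    (C : ℝ) (N : ℕ) (hbd : ∀ x ≥ (0:ℝ), |f x| ≤ C * x ^ N)
    (s : ℝ) (hs : 1 ≤ s) :
    twistedMellin (fun x => ∫ t in (0:ℝ)..x, f t) s =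
      twistedMellin f s + twistedMellin (fun x => ∫ t in (0:ℝ)..x, f t) (s - 1) :=
  twistedMellin_eq_add_of_hasDerivAt (hf.mono Ioi_subset_Ici_self) (fun x hx => hbd x hx.le)
    (continuousWithinAt_primitive_of_continuousOn_Ici hf)
    (fun _ hx => hasDerivAt_primitive_of_continuousOn_Ici hf hx)
    (fun _ hx => abs_primitive_le hf hbd hx.le) (by linarith)
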